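/- (Completeness of K with respect to KVF) Let E(x_1, …, x_k) be a safe L-expression. Then there exist a finite set A of regular box-formulas, a function f^E : {x_1, …, x_k} → P(A), an index j, and a formula φ ∈ f^E(x_j) with head p^l_m, such that in every Kripke frame and under every assignment of points to x_1, …, x_k, the expressions E, KF_{f^E}^{p^l_m} and KVF^φ_{f^E}(x_j) denote the same subset. -/
import Mathlib

set_option autoImplicit true

universe u v w

/-- Modal formulas over modality indices `Λ` and propositional variables `V`. -/
inductive MF (Λ : Type u) (V : Type v) : Type (max u v)
  | var : V → MF Λ V
  | top : MF Λ V
  | bot : MF Λ V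
  | and : MF Λ V → MF Λ V → MF Λ V
  | or  : MF Λ V → MF Λ V → MF Λ V
  | neg : MF Λ V → MF Λ V
  | imp : MF Λ V → MF Λ V → MF Λ V
  | dia : Λ → MF Λ V → MF Λ V
  | box : Λ → MF Λ V → MF Λ V

namespace MF
variable {Λ : Type u} {V : Type v}

/-- The set of propositional variables occurring in a modal formula. -/
def vars : MF Λ V → Set V
  | var p => {p}
  | top => ∅
  | bot => ∅
  | and a b => vars a ∪ vars b
  | or a b => vars a ∪ vars b
  | neg a => vars a
  | imp a b => vars a ∪ vars b
  | dia _ a => vars a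
  | box _ a => vars a

end MF

/-- Positive modal formulas: built without `¬` and `→`. -/
inductive Positive {Λ : Type u} {V : Type v} : MF Λ V → Prop
  | var (p : V) : Positive (.var p)
  | top : Positive .top
  | bot : Positive .bot
  | and {a b} : Positive a → Positive b → Positive (.and a b)
  | or {a b} : Positive a → Positive b → Positive (.or a b)
  | dia (l) {a} : Positive a → Positive (.dia l a)
  | box (l) {a} : Positive a → Positive (.box l a)

/-- A Kripke frame with accessibility relations indexed by `Λ`. -/
structure Frame (Λ : Type u) where
  W : Type w
  R : Λ → W → W → Prop

/-- Kripke satisfaction `F, x, θ ⊨ φ`. -/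
def sat {Λ : Type u} {V : Type v} (F : Frame Λ) (θ : V → Set F.W) : F.W → MF Λ V → Prop
  | x, .var p => x ∈ θ p
  | _, .top => True
  | _, .bot => False
  | x, .and a b => sat F θ x a ∧ sat F θ x b
  | x, .or a b => sat F θ x a ∨ sat F θ x b
  | x, .neg a => ¬ sat F θ x a
  | x, .imp a b => sat F θ x a → sat F θ x b
  | x, .dia l a => ∃ y, F.R l x y ∧ sat F θ y a
  | x, .box l a => ∀ y, F.R l x y → sat F θ y a

/-- `BoxF φ p S`: `φ` is a box-formula with head `p`, in which the set of variables
occurring not as the head is `S`. -/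
inductive BoxF {Λ : Type u} {V : Type v} : MF Λ V → V → Set V → Prop
  | var (p : V) : BoxF (.var p) p ∅
  | imp {POS ψ p S} : Positive POS → BoxF ψ p S → BoxF (.imp POS ψ) p (MF.vars POS ∪ S)
  | box (l) {ψ p S} : BoxF ψ p S → BoxF (.box l ψ) p S

/-- `RegBF r φ p`: relative to the rank assignment `r`, `φ` is a regular box-formula
with head `p` (of rank `r p`): all variables of the positive antecedents have rank `< r p`. -/
inductive RegBF {Λ : Type u} {V : Type v} (r : V → ℕ) : MF Λ V → V → Prop
  | var (p : V) : RegBF r (.var p) p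
  | imp {POS ψ p} : Positive POS → (∀ q ∈ MF.vars POS, r q < r p) →
      RegBF r ψ p → RegBF r (.imp POS ψ) p
  | box (l) {ψ p} : RegBF r ψ p → RegBF r (.box l ψ) p

/-- The edge relation of the dependency graph of a set `A` of box-formulas:
`p → q` iff `p` occurs (not as the head) in some member of `A` with head `q`. -/
def depEdge {Λ : Type u} {V : Type v} (A : Set (MF Λ V)) (p q : V) : Prop :=
  ∃ φ ∈ A, ∃ S, BoxF φ q S ∧ p ∈ S

/-- A set of box-formulas is regular if its dependency graph has no oriented cycle. -/
def RegularSet {Λ : Type u} {V : Type v} (A : Set (MF Λ V)) : Prop :=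
  ∀ p : V, ¬ Relation.TransGen (depEdge A) p p

/-- `R_λ^{-1}(A) = {u : ∃ v, u R_λ v ∧ v ∈ A}`. -/
def Rinv {Λ : Type u} (F : Frame Λ) (l : Λ) (A : Set F.W) : Set F.W :=
  {u | ∃ v, F.R l u v ∧ v ∈ A}

/-- `R_λ^□(A) = {u : ∀ v, u R_λ v → v ∈ A}`. -/
def RboxOp {Λ : Type u} (F : Frame Λ) (l : Λ) (A : Set F.W) : Set F.W :=
  {u | ∀ v, F.R l u v → v ∈ A}

/-- `R_λ(A) = {u : ∃ v, v R_λ u ∧ v ∈ A}`. -/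
def Rfwd {Λ : Type u} (F : Frame Λ) (l : Λ) (A : Set F.W) : Set F.W :=
  {u | ∃ v, F.R l v u ∧ v ∈ A}

/-- The interpretation of the expression `KP^{POS}` in a frame `F`, the set variables
`P^l_i` being interpreted by `P`.  (Junk value `∅` on non-positive constructors.) -/
def KPsem {Λ : Type u} (F : Frame Λ) (P : ℕ × ℕ → Set F.W) : MF Λ (ℕ × ℕ) → Set F.W
  | .var q => P q
  | .top => Set.univ
  | .bot => ∅
  | .and a b => KPsem F P a ∩ KPsem F P b
  | .or a b => KPsem F P a ∪ KPsem F P b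
  | .dia l a => Rinv F l (KPsem F P a)
  | .box l a => RboxOp F l (KPsem F P a)
  | .neg _ => ∅
  | .imp _ _ => ∅

/-- The interpretation of the expression `KV^φ` in a frame `F`: the set variables `P^l_i`
are interpreted by `P` and the extra variable `#` by the second argument.
(Junk value `∅` on constructors that do not occur in regular box-formulas.) -/
def KVsem {Λ : Type u} (F : Frame Λ) (P : ℕ × ℕ → Set F.W) : MF Λ (ℕ × ℕ) → Set F.W → Set F.W
  | .var _, X => X
  | .imp POS ψ, X => KVsem F P ψ (X ∩ KPsem F P POS)
  | .box l ψ, X => KVsem F P ψ (Rfwd F l X)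
  | _, _ => ∅

/-- The semantic minimal valuation: given points `g j` and sets `f j` of regular
box-formulas to be verified at `g j`, `thetaMinSem F g f k i` is the minimal value of the
variable `p^k_i`; it is defined by recursion on the rank `k` as the union, over all `j` and
all `φ ∈ f j` with head `p^k_i`, of `KV^φ(g j)` computed with the minimal values of the
variables of lower rank. -/
noncomputable def thetaMinSem {Λ : Type u} (F : Frame Λ) {ι : Type w} (g : ι → F.W)
    (f : ι → Set (MF Λ (ℕ × ℕ))) : ℕ → ℕ → Set F.W :=
  fun k => Nat.strongRecOn (motive := fun _ => ℕ → Set F.W) k fun k ih i =>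
    ⋃ (j : ι), ⋃ φ ∈ f j, ⋃ (_ : RegBF Prod.fst φ (k, i)),
      KVsem F (fun q => if h : q.1 < k then ih q.1 h q.2 else ∅) φ {g j}

/-- `L`-expressions: terms of the language `L` with individual variables `x_i` (`i : ℕ`),
constants `⊤, ⊥`, unary `R_λ^{-1}`, `R_λ^□`, `R_λ` and binary `∩`, `∪`. -/
inductive LExp (Λ : Type u) : Type u
  | var : ℕ → LExp Λ
  | top : LExp Λ
  | bot : LExp Λ
  | inter : LExp Λ → LExp Λ → LExp Λ
  | union : LExp Λ → LExp Λ → LExp Λ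
  | rinv : Λ → LExp Λ → LExp Λ
  | rbox : Λ → LExp Λ → LExp Λ
  | rfw : Λ → LExp Λ → LExp Λ

namespace LExp
variable {Λ : Type u}

/-- Denotation of an `L`-expression in a frame `F`, the variable `x_i` denoting the
singleton of the point `g i`. -/
def den (F : Frame Λ) (g : ℕ → F.W) : LExp Λ → Set F.W
  | var i => {g i}
  | top => Set.univ
  | bot => ∅
  | inter a b => den F g a ∩ den F g b
  | union a b => den F g a ∪ den F g b
  | rinv l a => Rinv F l (den F g a)
  | rbox l a => RboxOp F l (den F g a)
  | rfw l a => Rfwd F l (den F g a)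

/-- The set of (indices of) individual variables occurring in an `L`-expression. -/
def evars : LExp Λ → Set ℕ
  | var i => {i}
  | top => ∅
  | bot => ∅
  | inter a b => evars a ∪ evars b
  | union a b => evars a ∪ evars b
  | rinv _ a => evars a
  | rbox _ a => evars a
  | rfw _ a => evars a

end LExp

/-- The subexpression relation on `L`-expressions. -/
inductive Subexp {Λ : Type u} : LExp Λ → LExp Λ → Prop
  | refl (e : LExp Λ) : Subexp e e
  | interL {e a b} : Subexp e a → Subexp e (.inter a b)
  | interR {e a b} : Subexp e b → Subexp e (.inter a b)
  | unionL {e a b} : Subexp e a → Subexp e (.union a b)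
  | unionR {e a b} : Subexp e b → Subexp e (.union a b)
  | rinv (l) {e a} : Subexp e a → Subexp e (.rinv l a)
  | rbox (l) {e a} : Subexp e a → Subexp e (.rbox l a)
  | rfw (l) {e a} : Subexp e a → Subexp e (.rfw l a)

/-- `SafeFor e`: `e` is "safe for" the ambient expression, i.e. `e` is a variable, or
`R_λ(e')` with `e'` safe for it, or an intersection one of whose components is safe for it. -/
inductive SafeFor {Λ : Type u} : LExp Λ → Prop
  | var (i : ℕ) : SafeFor (.var i)
  | rfw (l) {a} : SafeFor a → SafeFor (.rfw l a)
  | interL {a b} : SafeFor a → SafeFor (.inter a b)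
  | interR {a b} : SafeFor b → SafeFor (.inter a b)

/-- An `L`-expression is safe if it is safe for itself and the argument of every
subexpression of the form `R_λ(ψ)` is safe for it. -/
def Safe {Λ : Type u} (e : LExp Λ) : Prop :=
  SafeFor e ∧ ∀ l a, Subexp (.rfw l a) e → SafeFor a

mutual
  /-- The class `K`: the least class of `L`-expressions containing the variables and closed
  under `S ↦ R_λ(S)` and `S ↦ S ∩ E` for `E` a positive combination of members of `K`. -/
  inductive InK {Λ : Type u} : LExp Λ → Prop
    | var (i : ℕ) : InK (.var i)
    | rfw (l : Λ) {S : LExp Λ} : InK S → InK (.rfw l S)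
    | inter {S E : LExp Λ} : InK S → PosOfK E → InK (.inter S E)
  /-- Positive combinations of members of `K`: built from members of `K` using only
  `∩`, `∪`, `R_λ^{-1}`, `R_λ^□`, `⊤`, `⊥`. -/
  inductive PosOfK {Λ : Type u} : LExp Λ → Prop
    | ofK {e : LExp Λ} : InK e → PosOfK e
    | top : PosOfK .top
    | bot : PosOfK .bot
    | inter {a b} : PosOfK a → PosOfK b → PosOfK (.inter a b)
    | union {a b} : PosOfK a → PosOfK b → PosOfK (.union a b)
    | rinv (l) {a} : PosOfK a → PosOfK (.rinv l a)
    | rbox (l) {a} : PosOfK a → PosOfK (.rbox l a)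
end

/-- Quasi-safe `L`-expressions: positive combinations of safe expressions, i.e. built from
safe expressions using only `∩`, `∪`, `R_λ^{-1}`, `R_λ^□`, `⊤`, `⊥`. -/
inductive QuasiSafe {Λ : Type u} : LExp Λ → Prop
  | safe {e : LExp Λ} : Safe e → QuasiSafe e
  | top : QuasiSafe .top
  | bot : QuasiSafe .bot
  | inter {a b} : QuasiSafe a → QuasiSafe b → QuasiSafe (.inter a b)
  | union {a b} : QuasiSafe a → QuasiSafe b → QuasiSafe (.union a b)
  | rinv (l) {a} : QuasiSafe a → QuasiSafe (.rinv l a)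
  | rbox (l) {a} : QuasiSafe a → QuasiSafe (.rbox l a)

/-- `ReplOne i ψ φ φ'`: `φ'` is the result of replacing one occurrence of the variable
`x_i` in `φ` by `ψ`. -/
inductive ReplOne {Λ : Type u} (i : ℕ) (ψ : LExp Λ) : LExp Λ → LExp Λ → Prop
  | here : ReplOne i ψ (.var i) ψ
  | interL {a a' b} : ReplOne i ψ a a' → ReplOne i ψ (.inter a b) (.inter a' b)
  | interR {a b b'} : ReplOne i ψ b b' → ReplOne i ψ (.inter a b) (.inter a b')
  | unionL {a a' b} : ReplOne i ψ a a' → ReplOne i ψ (.union a b) (.union a' b)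
  | unionR {a b b'} : ReplOne i ψ b b' → ReplOne i ψ (.union a b) (.union a b')
  | rinv (l) {a a'} : ReplOne i ψ a a' → ReplOne i ψ (.rinv l a) (.rinv l a')
  | rbox (l) {a a'} : ReplOne i ψ a a' → ReplOne i ψ (.rbox l a) (.rbox l a')
  | rfw (l) {a a'} : ReplOne i ψ a a' → ReplOne i ψ (.rfw l a) (.rfw l a')

/-- A finite union of `L`-expressions (empty union is `⊥`). -/
def unionList {Λ : Type u} : List (LExp Λ) → LExp Λ
  | [] => .bot
  | e :: es => .union e (unionList es)

/-- `UnionOfSafe e`: `e` is a finite union of safe expressions. -/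
inductive UnionOfSafe {Λ : Type u} : LExp Λ → Prop
  | bot : UnionOfSafe .bot
  | safe {e : LExp Λ} : Safe e → UnionOfSafe e
  | union {a b} : UnionOfSafe a → UnionOfSafe b → UnionOfSafe (.union a b)

/-- Syntactic `KP^{POS}`: the `L`-expression obtained from the positive formula `POS` by
replacing each set variable `P^l_i` by the `L`-expression `KF (l, i)`.
(Junk value on non-positive constructors.) -/
def KPsub {Λ : Type u} (KF : ℕ × ℕ → LExp Λ) : MF Λ (ℕ × ℕ) → LExp Λ
  | .var q => KF q
  | .top => .top
  | .bot => .bot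
  | .and a b => .inter (KPsub KF a) (KPsub KF b)
  | .or a b => .union (KPsub KF a) (KPsub KF b)
  | .dia l a => .rinv l (KPsub KF a)
  | .box l a => .rbox l (KPsub KF a)
  | .neg _ => .bot
  | .imp _ _ => .bot

/-- Syntactic `KVF^φ(t)`: the `L`-expression obtained from `KV^φ` by substituting the
`L`-expression `t` for `#` and `KF (l, i)` for each set variable `P^l_i`.
(Junk value on constructors that do not occur in regular box-formulas.) -/
def KVFsyn {Λ : Type u} (KF : ℕ × ℕ → LExp Λ) : MF Λ (ℕ × ℕ) → LExp Λ → LExp Λ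
  | .var _, t => t
  | .imp POS ψ, t => KVFsyn KF ψ (.inter t (KPsub KF POS))
  | .box l ψ, t => KVFsyn KF ψ (.rfw l t)
  | _, _ => .bot

open scoped Classical in
/-- The syntactic minimal valuation `KF_f^{p^k_i}` for variables `x_0, …, x_{n-1}` and
`f` assigning to each variable a finite set of regular box-formulas: defined by recursion on
the rank `k` as the union, over all `j < n` and all `φ ∈ f j` with head `p^k_i`, of
`KVF_f^φ(x_j)`, which is `KV^φ` with `x_j` substituted for `#` and `KF_f^{p^l_m}`
substituted for each `P^l_m` with `l < k`. -/
noncomputable def KFsyn {Λ : Type u} (n : ℕ) (f : ℕ → Finset (MF Λ (ℕ × ℕ))) :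
    ℕ → ℕ → LExp Λ :=
  fun k => Nat.strongRecOn (motive := fun _ => ℕ → LExp Λ) k fun k ih i =>
    unionList (((List.range n).flatMap fun j =>
      ((f j).toList.filter fun φ => decide (RegBF Prod.fst φ (k, i))).map fun φ =>
        KVFsyn (fun q => if h : q.1 < k then ih q.1 h q.2 else LExp.bot) φ (LExp.var j)))

/-- The expressions substituted for the set variables `P^l_m`, `l < k`, in `KVF`:
the syntactic minimal valuations of the lower ranks. -/
noncomputable def lowKF {Λ : Type u} (n : ℕ) (f : ℕ → Finset (MF Λ (ℕ × ℕ))) (k : ℕ) :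
    ℕ × ℕ → LExp Λ :=
  fun q => if q.1 < k then KFsyn n f q.1 q.2 else LExp.bot

/-- `KVFat n f φ j k` is the `L`-expression `KVF_f^φ(x_j)` for `φ` a regular box-formula
of rank `k`. -/
noncomputable def KVFat {Λ : Type u} (n : ℕ) (f : ℕ → Finset (MF Λ (ℕ × ℕ)))
    (φ : MF Λ (ℕ × ℕ)) (j k : ℕ) : LExp Λ :=
  KVFsyn (lowKF n f k) φ (.var j)

/-- A labelled tree-like structure: a set of vertices with relations indexed by `Λ`,
a root, and a label function assigning to every vertex a set of labels from `α`. -/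
structure LabTree (Λ : Type u) (α : Type v) where
  V : Type
  R : Λ → V → V → Prop
  root : V
  label : V → Set α

/-- Derivation trees witnessing that a formula is built from base formulas using only
`∧` and `◇_λ`. -/
inductive BuiltT (Λ : Type u) (V : Type v) : Type (max u v)
  | base : MF Λ V → BuiltT Λ V
  | and : BuiltT Λ V → BuiltT Λ V → BuiltT Λ V
  | dia : Λ → BuiltT Λ V → BuiltT Λ V

/-- The modal formula described by a derivation tree. -/
def BuiltT.formula {Λ : Type u} {V : Type v} : BuiltT Λ V → MF Λ V
  | base φ => φ
  | and a b => .and a.formula b.formula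
  | dia l a => .dia l a.formula

/-- The derivation tree uses only base formulas from `A`. -/
def BuiltT.Ok {Λ : Type u} {V : Type v} (A : Set (MF Λ V)) : BuiltT Λ V → Prop
  | base φ => φ ∈ A
  | and a b => a.Ok A ∧ b.Ok A
  | dia _ a => a.Ok A

/-- Helper for gluing two labelled trees at their roots: the relation on the disjoint sum,
with the edges out of the second root re-attached to the first root. -/
def glueR {Λ : Type u} {W₁ W₂ : Type} (R₁ : Λ → W₁ → W₁ → Prop) (R₂ : Λ → W₂ → W₂ → Prop)
    (r₁ : W₁) (r₂ : W₂) (l : Λ) : W₁ ⊕ W₂ → W₁ ⊕ W₂ → Prop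
  | Sum.inl a, Sum.inl b => R₁ l a b
  | Sum.inr a, Sum.inr b => R₂ l a b
  | Sum.inl a, Sum.inr b => a = r₁ ∧ R₂ l r₂ b
  | Sum.inr _, Sum.inl _ => False

open Classical in
/-- Helper for gluing two labelled trees at their roots: the label function, the glued root
receiving the union of the two root labels. -/
noncomputable def glueLab {α : Type w} {W₁ W₂ : Type} (L₁ : W₁ → Set α) (L₂ : W₂ → Set α)
    (r₁ : W₁) (r₂ : W₂) : W₁ ⊕ W₂ → Set α
  | Sum.inl a => if a = r₁ then L₁ r₁ ∪ L₂ r₂ else L₁ a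
  | Sum.inr b => L₂ b

/-- Helper for prefixing a labelled tree with a new root: the relation on `Option W`,
with an `R_{l₀}`-edge from the new root `none` to the old root `r`. -/
def prefR {Λ : Type u} {W : Type} (R : Λ → W → W → Prop) (l₀ : Λ) (r : W) (l : Λ) :
    Option W → Option W → Prop
  | none, some w => l = l₀ ∧ w = r
  | some a, some b => R l a b
  | _, _ => False

/-- Helper for prefixing a labelled tree with a new root: the label function, the new root
getting the empty label. -/
def prefLab {α : Type w} {W : Type} (L : W → Set α) : Option W → Set α
  | none => ∅
  | some a => L a

/-- The reduced syntactical tree of a formula built from base formulas using `∧` and `◇_λ`: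
a single root labelled `{a}` for a base formula `a`; for a conjunction, the two trees
with their roots identified (labels united); for `◇_λ ψ`, a new root with empty label and an
`R_λ`-edge to the root of the tree of `ψ`. -/
noncomputable def TreeOf {Λ : Type u} {V : Type v} : BuiltT Λ V → LabTree Λ (MF Λ V)
  | .base φ =>
      { V := Unit, R := fun _ _ _ => False, root := (), label := fun _ => {φ} }
  | .and b₁ b₂ =>
      let T₁ := TreeOf b₁
      let T₂ := TreeOf b₂
      { V := {v : T₁.V ⊕ T₂.V // v ≠ Sum.inr T₂.root},
        R := fun l u v => glueR T₁.R T₂.R T₁.root T₂.root l u.1 v.1,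
        root := ⟨Sum.inl T₁.root, by exact Sum.inl_ne_inr⟩,
        label := fun v => glueLab T₁.label T₂.label T₁.root T₂.root v.1 }
  | .dia l b =>
      let T := TreeOf b
      { V := Option T.V,
        R := fun l' u v => prefR T.R l T.root l' u v,
        root := none,
        label := fun v => prefLab T.label v }

/-- Restrictedly positive first-order formulas over the frame language: built from atoms
`y ∈ E` (`E` an `L`-expression) using `∧`, `∨` and the restricted quantifiers
`(∀ y ◁_λ x)` and `(∃ y ◁_λ x)`. -/
inductive KrF (Λ : Type u) : Type u
  | atom : ℕ → LExp Λ → KrF Λ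
  | and : KrF Λ → KrF Λ → KrF Λ
  | or : KrF Λ → KrF Λ → KrF Λ
  | all : ℕ → Λ → ℕ → KrF Λ → KrF Λ
  | ex : ℕ → Λ → ℕ → KrF Λ → KrF Λ

namespace KrF
variable {Λ : Type u}

/-- Truth of a restrictedly positive formula in a frame under an assignment `g` of points to
individual variables; the atom `y ∈ E` is read via the `#`-translation, i.e. as membership
of `g y` in the denotation of `E`. -/
def holds (F : Frame Λ) : (ℕ → F.W) → KrF Λ → Prop
  | g, atom y E => g y ∈ E.den F g
  | g, and a b => holds F g a ∧ holds F g b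
  | g, or a b => holds F g a ∨ holds F g b
  | g, all y l x β => ∀ w, F.R l (g x) w → holds F (Function.update g y w) β
  | g, ex y l x β => ∃ w, F.R l (g x) w ∧ holds F (Function.update g y w) β

/-- Free variables. -/
def fv : KrF Λ → Set ℕ
  | atom y E => insert y E.evars
  | and a b => fv a ∪ fv b
  | or a b => fv a ∪ fv b
  | all y _ x β => insert x (fv β \ {y})
  | ex y _ x β => insert x (fv β \ {y})

/-- Bound variables. -/
def bv : KrF Λ → Set ℕ
  | atom _ _ => ∅
  | and a b => bv a ∪ bv b
  | or a b => bv a ∪ bv b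
  | all y _ _ β => insert y (bv β)
  | ex y _ _ β => insert y (bv β)

/-- No two distinct quantifier occurrences bind the same variable. -/
def CleanBound : KrF Λ → Prop
  | atom _ _ => True
  | and a b => CleanBound a ∧ CleanBound b ∧ bv a ∩ bv b = ∅
  | or a b => CleanBound a ∧ CleanBound b ∧ bv a ∩ bv b = ∅
  | all y _ _ β => CleanBound β ∧ y ∉ bv β
  | ex y _ _ β => CleanBound β ∧ y ∉ bv β

/-- Clean formulas: no variable occurs both free and bound, and no two distinct quantifier
occurrences bind the same variable. -/
def Clean (φ : KrF Λ) : Prop := fv φ ∩ bv φ = ∅ ∧ CleanBound φ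

/-- All the `L`-expressions occurring in atoms of the formula satisfy `P`. -/
def AtomsAll (P : LExp Λ → Prop) : KrF Λ → Prop
  | atom _ E => P E
  | and a b => AtomsAll P a ∧ AtomsAll P b
  | or a b => AtomsAll P a ∧ AtomsAll P b
  | all _ _ _ β => AtomsAll P β
  | ex _ _ _ β => AtomsAll P β

/-- Quantifier-free formulas (built from atoms using only `∧` and `∨`). -/
def QFree : KrF Λ → Prop
  | atom _ _ => True
  | and a b => QFree a ∧ QFree b
  | or a b => QFree a ∧ QFree b
  | all _ _ _ _ => False
  | ex _ _ _ _ => False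

/-- Formulas built from atoms using only `∧`, `∨` and restricted universal quantification
(no existential quantifier). -/
def NoEx : KrF Λ → Prop
  | atom _ _ => True
  | and a b => NoEx a ∧ NoEx b
  | or a b => NoEx a ∧ NoEx b
  | all _ _ _ β => NoEx β
  | ex _ _ _ _ => False

/-- `GKok U e φ`: every variable occurring in an `L`-expression of an atom of `φ` is
inherently universal. Here `U` is the set of variables that are inherently universal so far
(initially the free variables) and `e` records whether we are within the scope of an
existential quantifier. -/
def GKok : Set ℕ → Bool → KrF Λ → Prop
  | U, _, atom _ E => E.evars ⊆ U
  | U, e, and a b => GKok U e a ∧ GKok U e b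
  | U, e, or a b => GKok U e a ∧ GKok U e b
  | U, false, all y _ _ β => GKok (insert y U) false β
  | U, true, all _ _ _ β => GKok U true β
  | U, _, ex _ _ _ β => GKok U true β

end KrF

/-- A generalized Kracht formula with free variables: clean, restrictedly positive with safe
atoms, and in every atom `y ∈ E` all variables of `E` are inherently universal. -/
def IsGenKrachtFV {Λ : Type u} (α : KrF Λ) : Prop :=
  α.Clean ∧ α.AtomsAll Safe ∧ α.GKok α.fv false

/-- A generalized Kracht formula: a generalized Kracht formula with free variables whose
only free variable is `x0`. -/
def IsGenKracht {Λ : Type u} (α : KrF Λ) (x0 : ℕ) : Prop :=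
  IsGenKrachtFV α ∧ α.fv = {x0}

/-- Generalized Sahlqvist antecedents: built from regular box-formulas and negative
formulas using only `∧`, `∨`, `◇_λ`. -/
inductive GSAnt {Λ : Type u} : MF Λ (ℕ × ℕ) → Prop
  | reg {φ p} : RegBF Prod.fst φ p → GSAnt φ
  | neg {φ} : Positive φ → GSAnt (.neg φ)
  | and {a b} : GSAnt a → GSAnt b → GSAnt (.and a b)
  | or {a b} : GSAnt a → GSAnt b → GSAnt (.or a b)
  | dia (l) {a} : GSAnt a → GSAnt (.dia l a)

/-- Generalized Sahlqvist formulas: built from generalized Sahlqvist implications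
`GSA → ⊥` by applying boxes and conjunctions, and disjunctions only to formulas without
common propositional variables. -/
inductive GSF {Λ : Type u} : MF Λ (ℕ × ℕ) → Prop
  | impl {a} : GSAnt a → GSF (.imp a .bot)
  | box (l) {a} : GSF a → GSF (.box l a)
  | and {a b} : GSF a → GSF b → GSF (.and a b)
  | or {a b} : GSF a → GSF b → MF.vars a ∩ MF.vars b = ∅ → GSF (.or a b)

open Classical in
/-- The modal translation `E^T` of a quasi-safe expression: safe subexpressions are
replaced by their associated propositional variables `p_E`, and `∩, ∪, R^{-1}_λ, R^□_λ`
become `∧, ∨, ◇_λ, □_λ`. -/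
noncomputable def Etrans {Λ : Type u} (pE : LExp Λ → ℕ × ℕ) : LExp Λ → MF Λ (ℕ × ℕ)
  | .var i => .var (pE (.var i))
  | .top => .top
  | .bot => .bot
  | .inter a b =>
      if Safe (LExp.inter a b) then .var (pE (.inter a b))
      else .and (Etrans pE a) (Etrans pE b)
  | .union a b =>
      if Safe (LExp.union a b) then .var (pE (.union a b))
      else .or (Etrans pE a) (Etrans pE b)
  | .rinv l a =>
      if Safe (LExp.rinv l a) then .var (pE (.rinv l a)) else .dia l (Etrans pE a)
  | .rbox l a =>
      if Safe (LExp.rbox l a) then .var (pE (.rbox l a)) else .box l (Etrans pE a)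
  | .rfw l a => if Safe (LExp.rfw l a) then .var (pE (.rfw l a)) else .bot

/-- A finite disjunction of modal formulas (empty disjunction is `⊥`). -/
def orList {Λ : Type u} {V : Type v} : List (MF Λ V) → MF Λ V
  | [] => .bot
  | a :: as => .or a (orList as)

section Helpers
open scoped Classical
variable {Λ : Type u}

open MF LExp

/-- Unfolding lemma for `KFsyn`. -/
lemma KFsyn_eq (n : ℕ) (f : ℕ → Finset (MF Λ (ℕ × ℕ))) (k i : ℕ) :
    KFsyn n f k i = unionList (((List.range n).flatMap fun j =>
      ((f j).toList.filter fun φ => decide (RegBF Prod.fst φ (k, i))).map fun φ =>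
        KVFsyn (lowKF n f k) φ (LExp.var j))) := by
  classical
  show Nat.strongRecOn (motive := fun _ => ℕ → LExp Λ) k _ i = _
  rw [Nat.strongRecOn_eq]
  have : (fun q : ℕ × ℕ => if h : q.1 < k then
      Nat.strongRecOn (motive := fun _ => ℕ → LExp Λ) q.1
        (fun k ih i => unionList (((List.range n).flatMap fun j =>
          ((f j).toList.filter fun φ => decide (RegBF Prod.fst φ (k, i))).map fun φ =>
            KVFsyn (fun q => if h : q.1 < k then ih q.1 h q.2 else LExp.bot) φ (LExp.var j)))) q.2
      else LExp.bot) = lowKF n f k := by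
    funext q
    simp only [lowKF, KFsyn]
    split <;> rfl
  rw [this]

lemma den_unionList_of {F : Frame Λ} {g : ℕ → F.W} (L : List (LExp Λ)) (X : Set F.W)
    (h : ∀ e ∈ L, e.den F g = X) (hne : L ≠ []) : (unionList L).den F g = X := by
  induction L with
  | nil => exact absurd rfl hne
  | cons a L ih =>
    show LExp.den F g a ∪ (unionList L).den F g = X
    rw [h a (by simp)]
    cases L with
    | nil => show X ∪ ∅ = X; simp
    | cons b L' =>
      rw [ih (fun e he => h e (List.mem_cons_of_mem _ he)) (by simp)]
      simp

lemma KFsyn_single {n : ℕ} {f : ℕ → Finset (MF Λ (ℕ × ℕ))} {k i j : ℕ}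
    {φ : MF Λ (ℕ × ℕ)} (hj : j < n) (hmem : φ ∈ f j) (hreg : RegBF Prod.fst φ (k, i))
    (huniq : ∀ j' ψ, ψ ∈ f j' → RegBF Prod.fst ψ (k, i) → j' = j ∧ ψ = φ)
    (F : Frame Λ) (g : ℕ → F.W) :
    (KFsyn n f k i).den F g = (KVFsyn (lowKF n f k) φ (LExp.var j)).den F g := by
  classical
  rw [KFsyn_eq]
  apply den_unionList_of
  · intro e he
    simp only [List.mem_flatMap, List.mem_map, List.mem_filter, List.mem_range] at he
    obtain ⟨j', hj', ψ, ⟨hψ, hdec⟩, rfl⟩ := he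
    have hreg' : RegBF Prod.fst ψ (k, i) := by simpa using hdec
    obtain ⟨rfl, rfl⟩ := huniq j' ψ (by simpa using hψ) hreg'
    rfl
  · refine List.ne_nil_of_mem (a := KVFsyn (lowKF n f k) φ (LExp.var j)) ?_
    simp only [List.mem_flatMap, List.mem_map, List.mem_filter, List.mem_range]
    exact ⟨j, hj, φ, ⟨by simpa using hmem, by simp [hreg]⟩, rfl⟩

/-- The head of a regular box-formula is among its variables. -/
lemma head_mem_vars {r : ℕ × ℕ → ℕ} {φ : MF Λ (ℕ × ℕ)} {p : ℕ × ℕ}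
    (h : RegBF r φ p) : p ∈ MF.vars φ := by
  induction h with
  | var => exact rfl
  | imp _ _ _ ih => exact Or.inr ih
  | box _ _ ih => exact ih

lemma vars_rank_lt {r : ℕ × ℕ → ℕ} {φ : MF Λ (ℕ × ℕ)} {p : ℕ × ℕ}
    (h : RegBF r φ p) : ∀ q ∈ MF.vars φ, q ≠ p → r q < r p := by
  induction h with
  | var => intro q hq hne; exact absurd hq hne
  | imp hPOS hrk _ ih =>
    intro q hq hne
    rcases hq with hq | hq
    · exact hrk q hq
    · exact ih q hq hne
  | box _ _ ih => exact ih

lemma head_unique {r : ℕ × ℕ → ℕ} {φ : MF Λ (ℕ × ℕ)} {p q : ℕ × ℕ}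
    (h : RegBF r φ p) (h' : RegBF r φ q) : p = q := by
  induction h with
  | var => cases h'; rfl
  | imp _ _ _ ih => cases h'; exact ih (by assumption)
  | box _ _ ih => cases h'; exact ih (by assumption)

lemma KPsub_congr {KF1 KF2 : ℕ × ℕ → LExp Λ} {POS : MF Λ (ℕ × ℕ)} (hP : Positive POS)
    (h : ∀ q ∈ MF.vars POS, KF1 q = KF2 q) : KPsub KF1 POS = KPsub KF2 POS := by
  induction hP with
  | var p => exact h p rfl
  | top => rfl
  | bot => rfl
  | and _ _ iha ihb =>
    show LExp.inter _ _ = LExp.inter _ _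
    rw [iha fun q hq => h q (Or.inl hq), ihb fun q hq => h q (Or.inr hq)]
  | or _ _ iha ihb =>
    show LExp.union _ _ = LExp.union _ _
    rw [iha fun q hq => h q (Or.inl hq), ihb fun q hq => h q (Or.inr hq)]
  | dia l _ ih => show LExp.rinv _ _ = LExp.rinv _ _; rw [ih h]
  | box l _ ih => show LExp.rbox _ _ = LExp.rbox _ _; rw [ih h]

lemma KVFsyn_congr {KF1 KF2 : ℕ × ℕ → LExp Λ} {φ : MF Λ (ℕ × ℕ)} {p : ℕ × ℕ}
    (hφ : RegBF Prod.fst φ p)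
    (h : ∀ q ∈ MF.vars φ, q ≠ p → KF1 q = KF2 q) :
    ∀ t, KVFsyn KF1 φ t = KVFsyn KF2 φ t := by
  induction hφ with
  | var => intro t; rfl
  | @imp POS ψ p hPOS hrk hψ ih =>
    intro t
    show KVFsyn KF1 ψ _ = KVFsyn KF2 ψ _
    have : KPsub KF1 POS = KPsub KF2 POS := by
      refine KPsub_congr hPOS fun q hq => h q (Or.inl hq) fun hqp => ?_
      subst hqp; exact lt_irrefl _ (hrk q hq)
    rw [this]
    exact ih (fun q hq hne => h q (Or.inr hq) hne) _
  | box l hψ ih =>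
    intro t
    show KVFsyn KF1 _ _ = KVFsyn KF2 _ _
    exact ih h _

/-- Replace the head variable of a regular box-formula. -/
def substHead (ψ0 : MF Λ (ℕ × ℕ)) : MF Λ (ℕ × ℕ) → MF Λ (ℕ × ℕ)
  | .var _ => ψ0
  | .imp a b => .imp a (substHead ψ0 b)
  | .box l b => .box l (substHead ψ0 b)
  | .top => .top
  | .bot => .bot
  | .and a b => .and a b
  | .or a b => .or a b
  | .neg a => .neg a
  | .dia l a => .dia l a

lemma KVFsyn_substHead {KF : ℕ × ℕ → LExp Λ} {φ : MF Λ (ℕ × ℕ)} {p : ℕ × ℕ}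
    (hφ : RegBF Prod.fst φ p) (ψ0 : MF Λ (ℕ × ℕ)) :
    ∀ t, KVFsyn KF (substHead ψ0 φ) t = KVFsyn KF ψ0 (KVFsyn KF φ t) := by
  induction hφ with
  | var => intro t; rfl
  | imp _ _ _ ih => intro t; exact ih _
  | box _ _ ih => intro t; exact ih _

lemma RegBF_substHead {φ ψ0 : MF Λ (ℕ × ℕ)} {p p' : ℕ × ℕ}
    (hφ : RegBF Prod.fst φ p) (hψ0 : RegBF Prod.fst ψ0 p') (hle : p.1 ≤ p'.1) :
    RegBF Prod.fst (substHead ψ0 φ) p' := by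
  induction hφ with
  | var => exact hψ0
  | imp hPOS hrk _ ih =>
    exact RegBF.imp hPOS (fun q hq => lt_of_lt_of_le (hrk q hq) hle) (ih hle)
  | box l _ ih => exact RegBF.box l (ih hle)

lemma vars_substHead {φ : MF Λ (ℕ × ℕ)} {p : ℕ × ℕ} (ψ0 : MF Λ (ℕ × ℕ))
    (hφ : RegBF Prod.fst φ p) :
    MF.vars (substHead ψ0 φ) ⊆ MF.vars φ ∪ MF.vars ψ0 := by
  induction hφ with
  | var => exact fun q hq => Or.inr hq
  | @imp POS ψ _ _ _ _ ih =>
    intro q hq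
    rcases hq with hq | hq
    · exact Or.inl (Or.inl hq)
    · rcases ih hq with hq | hq
      · exact Or.inl (Or.inr hq)
      · exact Or.inr hq
  | box _ _ ih => exact ih

end Helpers
section Core
open scoped Classical
variable {Λ : Type u}

/-- The conclusion of the main induction for safe expressions. -/
def MainConcl (E : LExp Λ) (n k₀ : ℕ) : Prop :=
  ∃ (k i j : ℕ) (f : ℕ → Finset (MF Λ (ℕ × ℕ))) (φ : MF Λ (ℕ × ℕ)),
    k₀ ≤ k ∧ j < n ∧ φ ∈ f j ∧ RegBF Prod.fst φ (k, i) ∧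
    (∀ j', n ≤ j' → f j' = ∅) ∧
    (∀ j' ψ, ψ ∈ f j' → ∃ p : ℕ × ℕ, RegBF Prod.fst ψ p ∧ k₀ ≤ p.1 ∧ p.1 ≤ k ∧
        (p.1 = k → j' = j ∧ ψ = φ)) ∧
    (∀ j' ψ, ψ ∈ f j' → ∀ q ∈ MF.vars ψ, k₀ ≤ q.1 ∧ q.1 ≤ k) ∧
    (∀ f' : ℕ → Finset (MF Λ (ℕ × ℕ)), (∀ j', f j' ⊆ f' j') →
      (∀ j' ψ, ψ ∈ f' j' → ψ ∉ f j' →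
        ∃ p : ℕ × ℕ, RegBF Prod.fst ψ p ∧ (p.1 < k₀ ∨ k < p.1)) →
      ∀ (F : Frame.{u, w} Λ) (g : ℕ → F.W),
        E.den F g = (KVFsyn (lowKF n f' k) φ (LExp.var j)).den F g)

/-- The conclusion of the inner induction translating general expressions into
positive formulas. -/
def BConcl (B : LExp Λ) (n k₀ : ℕ) : Prop :=
  ∃ (k : ℕ) (f : ℕ → Finset (MF Λ (ℕ × ℕ))) (POS : MF Λ (ℕ × ℕ)),
    k₀ ≤ k ∧ Positive POS ∧ (∀ q ∈ MF.vars POS, k₀ ≤ q.1 ∧ q.1 ≤ k) ∧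
    (∀ j', n ≤ j' → f j' = ∅) ∧
    (∀ j' ψ, ψ ∈ f j' → ∃ p : ℕ × ℕ, RegBF Prod.fst ψ p ∧ k₀ ≤ p.1 ∧ p.1 ≤ k) ∧
    (∀ j' ψ, ψ ∈ f j' → ∀ q ∈ MF.vars ψ, k₀ ≤ q.1 ∧ q.1 ≤ k) ∧
    (∀ f' : ℕ → Finset (MF Λ (ℕ × ℕ)), (∀ j', f j' ⊆ f' j') →
      (∀ j' ψ, ψ ∈ f' j' → ψ ∉ f j' →
        ∃ p : ℕ × ℕ, RegBF Prod.fst ψ p ∧ (p.1 < k₀ ∨ k < p.1)) →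
      ∀ (F : Frame.{u, w} Λ) (g : ℕ → F.W),
        B.den F g = (KPsub (fun q => KFsyn n f' q.1 q.2) POS).den F g)

lemma kfsyn_of_main {n k₀ k i j : ℕ} {f f' : ℕ → Finset (MF Λ (ℕ × ℕ))}
    {φ : MF Λ (ℕ × ℕ)} (hk : k₀ ≤ k) (hj : j < n) (hmem : φ ∈ f j)
    (hreg : RegBF Prod.fst φ (k, i))
    (H4 : ∀ j' ψ, ψ ∈ f j' → ∃ p : ℕ × ℕ, RegBF Prod.fst ψ p ∧ k₀ ≤ p.1 ∧ p.1 ≤ k ∧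
        (p.1 = k → j' = j ∧ ψ = φ))
    (hsub : ∀ j', f j' ⊆ f' j')
    (hext : ∀ j' ψ, ψ ∈ f' j' → ψ ∉ f j' →
        ∃ p : ℕ × ℕ, RegBF Prod.fst ψ p ∧ (p.1 < k₀ ∨ k < p.1))
    (F : Frame.{u, w} Λ) (g : ℕ → F.W) :
    (KFsyn n f' k i).den F g = (KVFsyn (lowKF n f' k) φ (LExp.var j)).den F g := by
  apply KFsyn_single hj (hsub j hmem) hreg
  intro j' ψ hψ hregψ
  by_cases hin : ψ ∈ f j'
  · obtain ⟨p, hp, _, _, htop⟩ := H4 j' ψ hin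
    obtain rfl := head_unique hp hregψ
    exact htop rfl
  · obtain ⟨p, hp, hout⟩ := hext j' ψ hψ hin
    obtain rfl := head_unique hp hregψ
    simp only at hout
    omega

/-- A safe expression, seen as an "atom", satisfies the inner conclusion. -/
lemma bconcl_of_main {E : LExp Λ} {n k₀ : ℕ} (h : MainConcl.{u, w} E n k₀) :
    BConcl.{u, w} E n k₀ := by
  obtain ⟨k, i, j, f, φ, hk, hj, hmem, hreg, hsupp, H4, H5, H6⟩ := h
  refine ⟨k, f, .var (k, i), hk, .var _, ?_, hsupp, ?_, H5, ?_⟩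
  · rintro q rfl; exact ⟨hk, le_refl _⟩
  · intro j' ψ hψ
    obtain ⟨p, hp, h1, h2, _⟩ := H4 j' ψ hψ
    exact ⟨p, hp, h1, h2⟩
  · intro f' hsub hext F g
    have h1 := H6 f' hsub hext F g
    have h2 := kfsyn_of_main hk hj hmem hreg H4 hsub hext F g
    show E.den F g = (KFsyn n f' k i).den F g
    rw [h1, h2]

lemma subexp_trans {e1 e2 e3 : LExp Λ} (h1 : Subexp e1 e2) (h2 : Subexp e2 e3) :
    Subexp e1 e3 := by
  induction h2 with
  | refl => exact h1
  | interL _ ih => exact .interL (ih h1)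
  | interR _ ih => exact .interR (ih h1)
  | unionL _ ih => exact .unionL (ih h1)
  | unionR _ ih => exact .unionR (ih h1)
  | rinv l _ ih => exact .rinv l (ih h1)
  | rbox l _ ih => exact .rbox l (ih h1)
  | rfw l _ ih => exact .rfw l (ih h1)

lemma safe_rfw_arg {E : LExp Λ} (hE : Safe E) {l : Λ} {a : LExp Λ}
    (h : Subexp (.rfw l a) E) : Safe (.rfw l a) :=
  ⟨SafeFor.rfw l (hE.2 l a h), fun l' a' h' => hE.2 l' a' (subexp_trans h' h)⟩

end Core
section BClaim
open scoped Classical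
variable {Λ : Type u}

lemma bclaim {MB n : ℕ}
    (IH : ∀ E' : LExp Λ, sizeOf E' ≤ MB → ∀ k₀, Safe E' →
      E'.evars ⊆ {i : ℕ | i < n} → MainConcl.{u, w} E' n k₀) :
    ∀ B : LExp Λ, sizeOf B ≤ MB → ∀ k₀, (∀ l a, Subexp (.rfw l a) B → SafeFor a) →
      B.evars ⊆ {i : ℕ | i < n} → BConcl.{u, w} B n k₀ := by
  intro B
  induction B with
  | var i' =>
    intro hsz k₀ hB hvars
    exact bconcl_of_main (IH _ hsz k₀ ⟨SafeFor.var i', by rintro l a h; cases h⟩ hvars)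
  | top =>
    intro hsz k₀ hB hvars
    refine ⟨k₀, fun _ => ∅, .top, le_refl _, .top, ?_, fun _ _ => rfl, ?_, ?_, ?_⟩
    · intro q hq; exact hq.elim
    · intro j' ψ hψ; exact absurd hψ (Finset.notMem_empty ψ)
    · intro j' ψ hψ; exact absurd hψ (Finset.notMem_empty ψ)
    · intro f' _ _ F g; rfl
  | bot =>
    intro hsz k₀ hB hvars
    refine ⟨k₀, fun _ => ∅, .bot, le_refl _, .bot, ?_, fun _ _ => rfl, ?_, ?_, ?_⟩
    · intro q hq; exact hq.elim
    · intro j' ψ hψ; exact absurd hψ (Finset.notMem_empty ψ)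
    · intro j' ψ hψ; exact absurd hψ (Finset.notMem_empty ψ)
    · intro f' _ _ F g; rfl
  | inter a b iha ihb =>
    intro hsz k₀ hB hvars
    have h1 : sizeOf a ≤ MB := by
      have := hsz; simp only [LExp.inter.sizeOf_spec] at this; omega
    have h2 : sizeOf b ≤ MB := by
      have := hsz; simp only [LExp.inter.sizeOf_spec] at this; omega
    obtain ⟨ka, fa, Pa, hka, hPa, hva, hsa, h4a, h5a, h6a⟩ :=
      iha h1 k₀ (fun l' a' h => hB l' a' (Subexp.interL h)) (fun i hi => hvars (Or.inl hi))
    obtain ⟨kb, fb, Pb, hkb, hPb, hvb, hsb, h4b, h5b, h6b⟩ :=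
      ihb h2 (ka + 1) (fun l' a' h => hB l' a' (Subexp.interR h)) (fun i hi => hvars (Or.inr hi))
    refine ⟨kb, fun j => fa j ∪ fb j, .and Pa Pb, by omega, .and hPa hPb, ?_, ?_, ?_, ?_, ?_⟩
    · rintro q (hq | hq)
      · have := hva q hq; omega
      · have := hvb q hq; omega
    · intro j' hj'; show fa j' ∪ fb j' = ∅; rw [hsa j' hj', hsb j' hj']; simp
    · intro j' ψ hψ
      rcases Finset.mem_union.1 hψ with h | h
      · obtain ⟨p, hp, hp1, hp2⟩ := h4a j' ψ h; exact ⟨p, hp, hp1, by omega⟩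
      · obtain ⟨p, hp, hp1, hp2⟩ := h4b j' ψ h; exact ⟨p, hp, by omega, hp2⟩
    · intro j' ψ hψ q hq
      rcases Finset.mem_union.1 hψ with h | h
      · have := h5a j' ψ h q hq; omega
      · have := h5b j' ψ h q hq; omega
    · intro f' hsub hext F g
      have hsuba : ∀ j', fa j' ⊆ f' j' :=
        fun j' => subset_trans Finset.subset_union_left (hsub j')
      have hsubb : ∀ j', fb j' ⊆ f' j' :=
        fun j' => subset_trans Finset.subset_union_right (hsub j')
      have hexta : ∀ j' ψ, ψ ∈ f' j' → ψ ∉ fa j' →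
          ∃ p : ℕ × ℕ, RegBF Prod.fst ψ p ∧ (p.1 < k₀ ∨ ka < p.1) := by
        intro j' ψ hψ hnot
        by_cases hb' : ψ ∈ fb j'
        · obtain ⟨p, hp, hp1, hp2⟩ := h4b j' ψ hb'; exact ⟨p, hp, Or.inr (by omega)⟩
        · obtain ⟨p, hp, hout⟩ := hext j' ψ hψ
            (by simp [Finset.mem_union, hnot, hb'])
          exact ⟨p, hp, by omega⟩
      have hextb : ∀ j' ψ, ψ ∈ f' j' → ψ ∉ fb j' →
          ∃ p : ℕ × ℕ, RegBF Prod.fst ψ p ∧ (p.1 < ka + 1 ∨ kb < p.1) := by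
        intro j' ψ hψ hnot
        by_cases ha' : ψ ∈ fa j'
        · obtain ⟨p, hp, hp1, hp2⟩ := h4a j' ψ ha'; exact ⟨p, hp, Or.inl (by omega)⟩
        · obtain ⟨p, hp, hout⟩ := hext j' ψ hψ
            (by simp [Finset.mem_union, hnot, ha'])
          exact ⟨p, hp, by omega⟩
      show a.den F g ∩ b.den F g = _ ∩ _
      rw [h6a f' hsuba hexta F g, h6b f' hsubb hextb F g]
  | union a b iha ihb =>
    intro hsz k₀ hB hvars
    have h1 : sizeOf a ≤ MB := by
      have := hsz; simp only [LExp.union.sizeOf_spec] at this; omega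
    have h2 : sizeOf b ≤ MB := by
      have := hsz; simp only [LExp.union.sizeOf_spec] at this; omega
    obtain ⟨ka, fa, Pa, hka, hPa, hva, hsa, h4a, h5a, h6a⟩ :=
      iha h1 k₀ (fun l' a' h => hB l' a' (Subexp.unionL h)) (fun i hi => hvars (Or.inl hi))
    obtain ⟨kb, fb, Pb, hkb, hPb, hvb, hsb, h4b, h5b, h6b⟩ :=
      ihb h2 (ka + 1) (fun l' a' h => hB l' a' (Subexp.unionR h)) (fun i hi => hvars (Or.inr hi))
    refine ⟨kb, fun j => fa j ∪ fb j, .or Pa Pb, by omega, .or hPa hPb, ?_, ?_, ?_, ?_, ?_⟩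
    · rintro q (hq | hq)
      · have := hva q hq; omega
      · have := hvb q hq; omega
    · intro j' hj'; show fa j' ∪ fb j' = ∅; rw [hsa j' hj', hsb j' hj']; simp
    · intro j' ψ hψ
      rcases Finset.mem_union.1 hψ with h | h
      · obtain ⟨p, hp, hp1, hp2⟩ := h4a j' ψ h; exact ⟨p, hp, hp1, by omega⟩
      · obtain ⟨p, hp, hp1, hp2⟩ := h4b j' ψ h; exact ⟨p, hp, by omega, hp2⟩
    · intro j' ψ hψ q hq
      rcases Finset.mem_union.1 hψ with h | h
      · have := h5a j' ψ h q hq; omega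
      · have := h5b j' ψ h q hq; omega
    · intro f' hsub hext F g
      have hsuba : ∀ j', fa j' ⊆ f' j' :=
        fun j' => subset_trans Finset.subset_union_left (hsub j')
      have hsubb : ∀ j', fb j' ⊆ f' j' :=
        fun j' => subset_trans Finset.subset_union_right (hsub j')
      have hexta : ∀ j' ψ, ψ ∈ f' j' → ψ ∉ fa j' →
          ∃ p : ℕ × ℕ, RegBF Prod.fst ψ p ∧ (p.1 < k₀ ∨ ka < p.1) := by
        intro j' ψ hψ hnot
        by_cases hb' : ψ ∈ fb j'
        · obtain ⟨p, hp, hp1, hp2⟩ := h4b j' ψ hb'; exact ⟨p, hp, Or.inr (by omega)⟩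
        · obtain ⟨p, hp, hout⟩ := hext j' ψ hψ
            (by simp [Finset.mem_union, hnot, hb'])
          exact ⟨p, hp, by omega⟩
      have hextb : ∀ j' ψ, ψ ∈ f' j' → ψ ∉ fb j' →
          ∃ p : ℕ × ℕ, RegBF Prod.fst ψ p ∧ (p.1 < ka + 1 ∨ kb < p.1) := by
        intro j' ψ hψ hnot
        by_cases ha' : ψ ∈ fa j'
        · obtain ⟨p, hp, hp1, hp2⟩ := h4a j' ψ ha'; exact ⟨p, hp, Or.inl (by omega)⟩
        · obtain ⟨p, hp, hout⟩ := hext j' ψ hψ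
            (by simp [Finset.mem_union, hnot, ha'])
          exact ⟨p, hp, by omega⟩
      show a.den F g ∪ b.den F g = _ ∪ _
      rw [h6a f' hsuba hexta F g, h6b f' hsubb hextb F g]
  | rinv l a iha =>
    intro hsz k₀ hB hvars
    have h1 : sizeOf a ≤ MB := by
      have := hsz; simp only [LExp.rinv.sizeOf_spec] at this; omega
    obtain ⟨ka, fa, Pa, hka, hPa, hva, hsa, h4a, h5a, h6a⟩ :=
      iha h1 k₀ (fun l' a' h => hB l' a' (Subexp.rinv l h)) hvars
    refine ⟨ka, fa, .dia l Pa, hka, .dia l hPa, hva, hsa, h4a, h5a, ?_⟩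
    intro f' hsub hext F g
    show Rinv F l (a.den F g) = Rinv F l _
    rw [h6a f' hsub hext F g]
  | rbox l a iha =>
    intro hsz k₀ hB hvars
    have h1 : sizeOf a ≤ MB := by
      have := hsz; simp only [LExp.rbox.sizeOf_spec] at this; omega
    obtain ⟨ka, fa, Pa, hka, hPa, hva, hsa, h4a, h5a, h6a⟩ :=
      iha h1 k₀ (fun l' a' h => hB l' a' (Subexp.rbox l h)) hvars
    refine ⟨ka, fa, .box l Pa, hka, .box l hPa, hva, hsa, h4a, h5a, ?_⟩
    intro f' hsub hext F g
    show RboxOp F l (a.den F g) = RboxOp F l _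
    rw [h6a f' hsub hext F g]
  | rfw l a iha =>
    intro hsz k₀ hB hvars
    exact bconcl_of_main (IH _ hsz k₀
      ⟨SafeFor.rfw l (hB l a (Subexp.refl _)), fun l' a' h' => hB l' a' h'⟩ hvars)

end BClaim
section MainLemma
open scoped Classical
variable {Λ : Type u}

lemma combine {A B E : LExp Λ} {n k₀ : ℕ}
    (hmainA : MainConcl.{u, w} A n k₀)
    (hB : ∀ k₀', BConcl.{u, w} B n k₀')
    (hden : ∀ (F : Frame.{u, w} Λ) (g : ℕ → F.W), E.den F g = A.den F g ∩ B.den F g) :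
    MainConcl.{u, w} E n k₀ := by
  obtain ⟨kA, iA, j, fA, φA, hkA, hj, hmemA, hregA, hsuppA, H4A, H5A, H6A⟩ := hmainA
  obtain ⟨kB, fB, POS, hkB, hPOS, hvPOS, hsuppB, H4B, H5B, H6B⟩ := hB (kA + 1)
  have hψ0 : RegBF Prod.fst (MF.imp POS (.var (kB + 1, 0)) : MF Λ (ℕ × ℕ)) (kB + 1, 0) :=
    .imp hPOS (fun q hq => by have := hvPOS q hq; show q.1 < kB + 1; omega) (.var _)
  have hreg' : RegBF Prod.fst (substHead (MF.imp POS (.var (kB + 1, 0))) φA) (kB + 1, 0) :=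
    RegBF_substHead hregA hψ0 (by show kA ≤ kB + 1; omega)
  refine ⟨kB + 1, 0, j,
    fun j'' => if j'' = j then insert (substHead (MF.imp POS (.var (kB + 1, 0))) φA)
      (fA j ∪ fB j) else fA j'' ∪ fB j'',
    substHead (MF.imp POS (.var (kB + 1, 0))) φA,
    by omega, hj, by simp, hreg', ?_, ?_, ?_, ?_⟩
  · intro j' hj'
    have hne : j' ≠ j := by omega
    simp only [if_neg hne]
    rw [hsuppA j' hj', hsuppB j' hj']; simp
  · intro j' ψ hψ
    have hcase : ψ = substHead (MF.imp POS (.var (kB + 1, 0))) φA ∧ j' = j ∨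
        ψ ∈ fA j' ∨ ψ ∈ fB j' := by
      simp only [] at hψ
      by_cases h : j' = j
      · subst h
        rw [if_pos rfl] at hψ
        simp only [Finset.mem_insert, Finset.mem_union] at hψ
        tauto
      · rw [if_neg h] at hψ
        simp only [Finset.mem_union] at hψ
        tauto
    rcases hcase with ⟨rfl, rfl⟩ | h | h
    · exact ⟨(kB + 1, 0), hreg', by show k₀ ≤ kB + 1; omega, le_refl _, fun _ => ⟨rfl, rfl⟩⟩
    · obtain ⟨p, hp, h1, h2, _⟩ := H4A j' ψ h
      exact ⟨p, hp, h1, by omega, fun hpk => absurd hpk (by omega)⟩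
    · obtain ⟨p, hp, h1, h2⟩ := H4B j' ψ h
      exact ⟨p, hp, by omega, by omega, fun hpk => absurd hpk (by omega)⟩
  · intro j' ψ hψ q hq
    have hcase : ψ = substHead (MF.imp POS (.var (kB + 1, 0))) φA ∧ j' = j ∨
        ψ ∈ fA j' ∨ ψ ∈ fB j' := by
      simp only [] at hψ
      by_cases h : j' = j
      · subst h
        rw [if_pos rfl] at hψ
        simp only [Finset.mem_insert, Finset.mem_union] at hψ
        tauto
      · rw [if_neg h] at hψ
        simp only [Finset.mem_union] at hψ
        tauto
    rcases hcase with ⟨rfl, rfl⟩ | h | h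
    · rcases vars_substHead _ hregA hq with hq' | hq'
      · have := H5A _ φA hmemA q hq'; omega
      · rcases hq' with hq' | hq'
        · have := hvPOS q hq'; omega
        · rcases hq' with rfl; exact ⟨by omega, le_refl _⟩
    · have := H5A j' ψ h q hq; omega
    · have := H5B j' ψ h q hq; omega
  · intro f'' hsub hext F g
    have hsubA : ∀ j'', fA j'' ⊆ f'' j'' := by
      intro j'' x hx
      apply hsub j''
      by_cases h : j'' = j
      · subst h
        simp only [if_pos rfl]
        exact Finset.mem_insert_of_mem (Finset.mem_union_left _ hx)
      · simp only [if_neg h]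
        exact Finset.mem_union_left _ hx
    have hsubB : ∀ j'', fB j'' ⊆ f'' j'' := by
      intro j'' x hx
      apply hsub j''
      by_cases h : j'' = j
      · subst h
        simp only [if_pos rfl]
        exact Finset.mem_insert_of_mem (Finset.mem_union_right _ hx)
      · simp only [if_neg h]
        exact Finset.mem_union_right _ hx
    have hextA : ∀ j' ψ, ψ ∈ f'' j' → ψ ∉ fA j' →
        ∃ p : ℕ × ℕ, RegBF Prod.fst ψ p ∧ (p.1 < k₀ ∨ kA < p.1) := by
      intro j' ψ hψ hnot
      by_cases hb' : ψ ∈ fB j'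
      · obtain ⟨p, hp, h1, h2⟩ := H4B j' ψ hb'
        exact ⟨p, hp, Or.inr (by omega)⟩
      · by_cases hin : ψ ∈ (if j' = j then insert (substHead (MF.imp POS
            (.var (kB + 1, 0))) φA) (fA j ∪ fB j) else fA j' ∪ fB j')
        · have hφ' : ψ = substHead (MF.imp POS (.var (kB + 1, 0))) φA := by
            by_cases h : j' = j
            · subst h
              rw [if_pos rfl] at hin
              simp only [Finset.mem_insert, Finset.mem_union] at hin
              tauto
            · rw [if_neg h] at hin
              simp only [Finset.mem_union] at hin
              tauto
          subst hφ'
          exact ⟨(kB + 1, 0), hreg', Or.inr (by show kA < kB + 1; omega)⟩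
        · obtain ⟨p, hp, hout⟩ := hext j' ψ hψ hin
          exact ⟨p, hp, by omega⟩
    have hextB : ∀ j' ψ, ψ ∈ f'' j' → ψ ∉ fB j' →
        ∃ p : ℕ × ℕ, RegBF Prod.fst ψ p ∧ (p.1 < kA + 1 ∨ kB < p.1) := by
      intro j' ψ hψ hnot
      by_cases ha' : ψ ∈ fA j'
      · obtain ⟨p, hp, h1, h2, _⟩ := H4A j' ψ ha'
        exact ⟨p, hp, Or.inl (by omega)⟩
      · by_cases hin : ψ ∈ (if j' = j then insert (substHead (MF.imp POS
            (.var (kB + 1, 0))) φA) (fA j ∪ fB j) else fA j' ∪ fB j')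
        · have hφ' : ψ = substHead (MF.imp POS (.var (kB + 1, 0))) φA := by
            by_cases h : j' = j
            · subst h
              rw [if_pos rfl] at hin
              simp only [Finset.mem_insert, Finset.mem_union] at hin
              tauto
            · rw [if_neg h] at hin
              simp only [Finset.mem_union] at hin
              tauto
          subst hφ'
          exact ⟨(kB + 1, 0), hreg', Or.inr (by show kB < kB + 1; omega)⟩
        · obtain ⟨p, hp, hout⟩ := hext j' ψ hψ hin
          exact ⟨p, hp, by omega⟩
    rw [hden F g, KVFsyn_substHead hregA]
    have e1 : KVFsyn (lowKF n f'' (kB + 1)) φA (LExp.var j)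
        = KVFsyn (lowKF n f'' kA) φA (LExp.var j) := by
      refine KVFsyn_congr hregA (fun q hq hne => ?_) _
      have hlt : q.1 < kA := vars_rank_lt hregA q hq hne
      simp only [lowKF]
      rw [if_pos (show q.1 < kB + 1 by omega), if_pos hlt]
    have e2 : KPsub (lowKF n f'' (kB + 1)) POS
        = KPsub (fun q => KFsyn n f'' q.1 q.2) POS := by
      refine KPsub_congr hPOS (fun q hq => ?_)
      have := hvPOS q hq
      simp only [lowKF]
      rw [if_pos (by omega)]
    show A.den F g ∩ B.den F g =
      (KVFsyn (lowKF n f'' (kB + 1)) φA (LExp.var j)).den F g ∩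
        (KPsub (lowKF n f'' (kB + 1)) POS).den F g
    rw [e1, e2, ← H6A f'' hsubA hextA F g, ← H6B f'' hsubB hextB F g]

lemma mainlemma {n : ℕ} : ∀ (M : ℕ) (E : LExp Λ), sizeOf E < M → ∀ k₀, Safe E →
    E.evars ⊆ {i : ℕ | i < n} → MainConcl.{u, w} E n k₀ := by
  intro M
  induction M with
  | zero => intro E h; omega
  | succ M IHM =>
    intro E hsz k₀ hE hvars
    obtain ⟨hSF, hrfw⟩ := hE
    cases hSF with
    | var i0 =>
      have hi0 : i0 < n := hvars rfl
      refine ⟨k₀, 0, i0, fun j' => if j' = i0 then {MF.var (k₀, 0)} else ∅,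
        .var (k₀, 0), le_refl _, hi0, by simp, .var _, ?_, ?_, ?_, ?_⟩
      · intro j' hj'
        have : j' ≠ i0 := by omega
        simp only []
        rw [if_neg this]
      · intro j' ψ hψ
        simp only [] at hψ
        by_cases h : j' = i0
        · subst h
          rw [if_pos rfl, Finset.mem_singleton] at hψ
          subst hψ
          exact ⟨(k₀, 0), .var _, le_refl _, le_refl _, fun _ => ⟨rfl, rfl⟩⟩
        · rw [if_neg h] at hψ
          exact absurd hψ (Finset.notMem_empty ψ)
      · intro j' ψ hψ q hq
        simp only [] at hψ
        by_cases h : j' = i0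
        · subst h
          rw [if_pos rfl, Finset.mem_singleton] at hψ
          subst hψ
          rcases hq with rfl
          exact ⟨le_refl _, le_refl _⟩
        · rw [if_neg h] at hψ
          exact absurd hψ (Finset.notMem_empty ψ)
      · intro f' _ _ F g; rfl
    | @rfw l A hA =>
      have hsafeA : Safe A := ⟨hA, fun l' a' h => hrfw l' a' (Subexp.rfw l h)⟩
      have hszA : sizeOf A < M := by
        have h := hsz; simp only [LExp.rfw.sizeOf_spec] at h; omega
      obtain ⟨k, i, j, f, φ, hk, hj, hmem, hreg, hsupp, H4, H5, H6⟩ :=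
        IHM A hszA k₀ hsafeA hvars
      have hψ0 : RegBF Prod.fst (MF.box l (.var (k + 1, 0)) : MF Λ (ℕ × ℕ)) (k + 1, 0) :=
        .box l (.var _)
      have hreg' : RegBF Prod.fst (substHead (MF.box l (.var (k + 1, 0))) φ) (k + 1, 0) :=
        RegBF_substHead hreg hψ0 (by show k ≤ k + 1; omega)
      refine ⟨k + 1, 0, j,
        fun j'' => if j'' = j then insert (substHead (MF.box l (.var (k + 1, 0))) φ) (f j)
          else f j'',
        substHead (MF.box l (.var (k + 1, 0))) φ,
        by omega, hj, by simp, hreg', ?_, ?_, ?_, ?_⟩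
      · intro j' hj'
        have hne : j' ≠ j := by omega
        simp only [if_neg hne]
        exact hsupp j' hj'
      · intro j' ψ hψ
        have hcase : ψ = substHead (MF.box l (.var (k + 1, 0))) φ ∧ j' = j ∨ ψ ∈ f j' := by
          simp only [] at hψ
          by_cases h : j' = j
          · subst h
            rw [if_pos rfl] at hψ
            simp only [Finset.mem_insert] at hψ
            tauto
          · rw [if_neg h] at hψ
            tauto
        rcases hcase with ⟨rfl, rfl⟩ | h
        · exact ⟨(k + 1, 0), hreg', by show k₀ ≤ k + 1; omega, le_refl _,
            fun _ => ⟨rfl, rfl⟩⟩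
        · obtain ⟨p, hp, h1, h2, _⟩ := H4 j' ψ h
          exact ⟨p, hp, h1, by omega, fun hpk => absurd hpk (by omega)⟩
      · intro j' ψ hψ q hq
        have hcase : ψ = substHead (MF.box l (.var (k + 1, 0))) φ ∧ j' = j ∨ ψ ∈ f j' := by
          simp only [] at hψ
          by_cases h : j' = j
          · subst h
            rw [if_pos rfl] at hψ
            simp only [Finset.mem_insert] at hψ
            tauto
          · rw [if_neg h] at hψ
            tauto
        rcases hcase with ⟨rfl, rfl⟩ | h
        · rcases vars_substHead _ hreg hq with hq' | hq'
          · have := H5 _ φ hmem q hq'; omega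
          · rcases hq' with rfl; exact ⟨by omega, le_refl _⟩
        · have := H5 j' ψ h q hq; omega
      · intro f'' hsub hext F g
        have hsubf : ∀ j'', f j'' ⊆ f'' j'' := by
          intro j'' x hx
          apply hsub j''
          by_cases h : j'' = j
          · subst h
            simp only [if_pos rfl]
            exact Finset.mem_insert_of_mem hx
          · simp only [if_neg h]
            exact hx
        have hextf : ∀ j' ψ, ψ ∈ f'' j' → ψ ∉ f j' →
            ∃ p : ℕ × ℕ, RegBF Prod.fst ψ p ∧ (p.1 < k₀ ∨ k < p.1) := by
          intro j' ψ hψ hnot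
          by_cases hin : ψ ∈ (if j' = j then
              insert (substHead (MF.box l (.var (k + 1, 0))) φ) (f j) else f j')
          · have hφ' : ψ = substHead (MF.box l (.var (k + 1, 0))) φ := by
              by_cases h : j' = j
              · subst h
                rw [if_pos rfl] at hin
                simp only [Finset.mem_insert] at hin
                tauto
              · rw [if_neg h] at hin
                exact absurd hin hnot
            subst hφ'
            exact ⟨(k + 1, 0), hreg', Or.inr (by show k < k + 1; omega)⟩
          · obtain ⟨p, hp, hout⟩ := hext j' ψ hψ hin
            exact ⟨p, hp, by omega⟩
        rw [KVFsyn_substHead hreg]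
        have e1 : KVFsyn (lowKF n f'' (k + 1)) φ (LExp.var j)
            = KVFsyn (lowKF n f'' k) φ (LExp.var j) := by
          refine KVFsyn_congr hreg (fun q hq hne => ?_) _
          have hlt : q.1 < k := vars_rank_lt hreg q hq hne
          simp only [lowKF]
          rw [if_pos (show q.1 < k + 1 by omega), if_pos hlt]
        show Rfwd F l (A.den F g) =
          Rfwd F l ((KVFsyn (lowKF n f'' (k + 1)) φ (LExp.var j)).den F g)
        rw [e1, ← H6 f'' hsubf hextf F g]
    | @interL A B hA =>
      have hsafeA : Safe A := ⟨hA, fun l' a' h => hrfw l' a' (Subexp.interL h)⟩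
      have hszA : sizeOf A < M := by
        have h := hsz; simp only [LExp.inter.sizeOf_spec] at h; omega
      have hszB : sizeOf B ≤ sizeOf B := le_refl _
      have hMB : ∀ E' : LExp Λ, sizeOf E' ≤ sizeOf B → ∀ k₀', Safe E' →
          E'.evars ⊆ {i : ℕ | i < n} → MainConcl.{u, w} E' n k₀' := by
        intro E' hE' k₀' hs hv
        apply IHM E' (by have h := hsz; simp only [LExp.inter.sizeOf_spec] at h; omega) k₀' hs hv
      exact combine
        (IHM A hszA k₀ hsafeA (fun i hi => hvars (Or.inl hi)))
        (fun k₀' => bclaim hMB B hszB k₀'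
          (fun l' a' h => hrfw l' a' (Subexp.interR h)) (fun i hi => hvars (Or.inr hi)))
        (fun F g => rfl)
    | @interR A B hB =>
      have hsafeB : Safe B := ⟨hB, fun l' a' h => hrfw l' a' (Subexp.interR h)⟩
      have hszB : sizeOf B < M := by
        have h := hsz; simp only [LExp.inter.sizeOf_spec] at h; omega
      have hszA : sizeOf A ≤ sizeOf A := le_refl _
      have hMA : ∀ E' : LExp Λ, sizeOf E' ≤ sizeOf A → ∀ k₀', Safe E' →
          E'.evars ⊆ {i : ℕ | i < n} → MainConcl.{u, w} E' n k₀' := by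
        intro E' hE' k₀' hs hv
        apply IHM E' (by have h := hsz; simp only [LExp.inter.sizeOf_spec] at h; omega) k₀' hs hv
      exact combine
        (IHM B hszB k₀ hsafeB (fun i hi => hvars (Or.inr hi)))
        (fun k₀' => bclaim hMA A hszA k₀'
          (fun l' a' h => hrfw l' a' (Subexp.interL h)) (fun i hi => hvars (Or.inl hi)))
        (fun F g => Set.inter_comm _ _)

end MainLemma
/-- completeness of `K` with respect to `KVF`: for every safe `L`-expression
`E` with variables among `x_0, …, x_{n-1}` there are a function `f^E` assigning to each of
these variables a finite set of regular box-formulas, an index `j` and a formula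
`φ ∈ f^E(x_j)` with head `p^l_m`, such that in every Kripke frame under every assignment of
points, `E`, `KF_{f^E}^{p^l_m}` and `KVF_{f^E}^φ(x_j)` denote the same subset. -/
theorem statement9 {Λ : Type u} (E : LExp Λ) (n : ℕ)
    (hE : Safe E) (hvars : E.evars ⊆ {i : ℕ | i < n}) :
    ∃ f : ℕ → Finset (MF Λ (ℕ × ℕ)),
      (∀ j, ∀ ψ ∈ f j, ∃ p : ℕ × ℕ, RegBF Prod.fst ψ p) ∧
      (∀ j, n ≤ j → f j = ∅) ∧
      ∃ j < n, ∃ (p : ℕ × ℕ) (φ : MF Λ (ℕ × ℕ)), φ ∈ f j ∧ RegBF Prod.fst φ p ∧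
        ∀ (F : Frame Λ) (g : ℕ → F.W),
          E.den F g = (KFsyn n f p.1 p.2).den F g ∧
          E.den F g = (KVFat n f φ j p.1).den F g := by
  obtain ⟨k, i, j, f, φ, hk, hj, hmem, hreg, hsupp, H4, H5, H6⟩ :=
    mainlemma (sizeOf E + 1) E (by omega) 0 hE hvars
  refine ⟨f, ?_, hsupp, j, hj, (k, i), φ, hmem, hreg, ?_⟩
  · intro j' ψ hψ
    obtain ⟨p, hp, _⟩ := H4 j' ψ hψ
    exact ⟨p, hp⟩
  · intro F g
    have h2 : E.den F g = (KVFsyn (lowKF n f k) φ (LExp.var j)).den F g :=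
      H6 f (fun _ => Finset.Subset.refl _) (fun j' ψ h hn => absurd h hn) F g
    have h1 := kfsyn_of_main hk hj hmem hreg H4 (fun _ => Finset.Subset.refl _)
      (fun j' ψ h hn => absurd h hn) F g
    exact ⟨h2.trans h1.symm, h2⟩
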